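/- With Σ₀ as above (nonzero skew-symmetric 4×4 matrices with ‖e‖ = ‖m‖, e·m = 0), for every pair of points σ₀, σ ∈ Σ₀ there exists a proper orthochronous Lorentz transformation Λ ∈ SO⁺(1,3) such that σ = Λ σ₀ Λᵀ. -/

import Mathlib

open Matrix

noncomputable section

def eta : Matrix (Fin 4) (Fin 4) ℝ := Matrix.diagonal ![1, -1, -1, -1]

/-- The full Lorentz group O(1,3): Λᵀ η Λ = η. -/
def IsLorentz (Λ : Matrix (Fin 4) (Fin 4) ℝ) : Prop := Λᵀ * eta * Λ = eta

/-- Electric part of a skew-symmetric 4×4 matrix: e_k = σ_{0k}. -/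
def eVec (σ : Matrix (Fin 4) (Fin 4) ℝ) : Fin 3 → ℝ := ![σ 0 1, σ 0 2, σ 0 3]

/-- Magnetic part: m₁ = σ_{23}, m₂ = σ_{31}, m₃ = σ_{12}. -/
def mVec (σ : Matrix (Fin 4) (Fin 4) ℝ) : Fin 3 → ℝ := ![σ 2 3, σ 3 1, σ 1 2]

/-- Σ₀: nonzero skew-symmetric matrices with ‖e‖ = ‖m‖ and e·m = 0. -/
def InSigma0 (σ : Matrix (Fin 4) (Fin 4) ℝ) : Prop :=
  σᵀ = -σ ∧ σ ≠ 0 ∧ (∑ i, eVec σ i ^ 2) = (∑ i, mVec σ i ^ 2) ∧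
    (∑ i, eVec σ i * mVec σ i) = 0

/-!
Write `σ = r • skewOfEM u v` with `r > 0` and `(u, v)` orthonormal: the electric and magnetic
parts of a point of Σ₀ are orthogonal of equal length. The spatial rotation with columns
`u, v, u × v` carries the standard point `skewOfEM e₁ e₂` to `skewOfEM u v`, and the boost of
rapidity `φ` along `e₁ × e₂` multiplies `skewOfEM e₁ e₂` by `exp φ`. So `B L B₀ᵀ`, with `B`, `B₀`
the rotations adapted to `σ`, `σ₀` and `L` the boost of rapidity `log (r / r₀)`, carries `σ₀` to
`σ`; it is orthochronous because rotations fix the time axis and `cosh ≥ 1`.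
-/

def skewOfEM (e m : Fin 3 → ℝ) : Matrix (Fin 4) (Fin 4) ℝ :=
  !![0, e 0, e 1, e 2;
     -e 0, 0, m 2, -m 1;
     -e 1, -m 2, 0, m 0;
     -e 2, m 1, -m 0, 0]

lemma skewOfEM_eVec_mVec {σ : Matrix (Fin 4) (Fin 4) ℝ} (hσ : σᵀ = -σ) :
    skewOfEM (eVec σ) (mVec σ) = σ := by
  have h : ∀ i j, σ j i = -σ i j := fun i j => by simpa using congrFun (congrFun hσ i) j
  ext i j
  fin_cases i <;> fin_cases j <;> simp [skewOfEM, eVec, mVec] <;>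
    linarith [h 0 0, h 1 1, h 2 2, h 3 3, h 0 1, h 0 2, h 0 3, h 1 2, h 1 3, h 2 3]

lemma skewOfEM_smul (r : ℝ) (e m : Fin 3 → ℝ) :
    skewOfEM (r • e) (r • m) = r • skewOfEM e m := by
  ext i j
  fin_cases i <;> fin_cases j <;> simp [skewOfEM]

lemma skewOfEM_zero : skewOfEM 0 0 = 0 := by
  simpa using skewOfEM_smul 0 0 0

lemma InSigma0.exists_eq_smul_skewOfEM {σ : Matrix (Fin 4) (Fin 4) ℝ} (h : InSigma0 σ) :
    ∃ r : ℝ, 0 < r ∧ ∃ u v : Fin 3 → ℝ, u ⬝ᵥ u = 1 ∧ v ⬝ᵥ v = 1 ∧ u ⬝ᵥ v = 0 ∧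
      σ = r • skewOfEM u v := by
  obtain ⟨hskew, hne, hnorm, horth⟩ := h
  replace hnorm : eVec σ ⬝ᵥ eVec σ = mVec σ ⬝ᵥ mVec σ := by simpa [dotProduct, sq] using hnorm
  have he : eVec σ ≠ 0 := by
    intro he
    have hm : mVec σ = 0 := dotProduct_self_eq_zero.mp (by rw [← hnorm, he, zero_dotProduct])
    exact hne (by rw [← skewOfEM_eVec_mVec hskew, he, hm, skewOfEM_zero])
  set e := eVec σ
  set m := mVec σ
  replace horth : e ⬝ᵥ m = 0 := horth
  have hpos : 0 < e ⬝ᵥ e := lt_of_le_of_ne (Finset.sum_nonneg fun i _ => mul_self_nonneg (e i))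
    (Ne.symm (dotProduct_self_eq_zero.not.mpr he))
  set r := √(e ⬝ᵥ e)
  have hr : 0 < r := Real.sqrt_pos.mpr hpos
  have hr2 : r * r = e ⬝ᵥ e := Real.mul_self_sqrt hpos.le
  refine ⟨r, hr, r⁻¹ • e, r⁻¹ • m, ?_, ?_, ?_, ?_⟩
  · simp only [dotProduct_smul, smul_dotProduct, smul_eq_mul, ← hr2]
    field_simp
  · simp only [dotProduct_smul, smul_dotProduct, smul_eq_mul, ← hnorm, ← hr2]
    field_simp
  · simp [dotProduct_smul, smul_dotProduct, horth]
  · rw [skewOfEM_smul, smul_smul, mul_inv_cancel₀ hr.ne', one_smul, skewOfEM_eVec_mVec hskew]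

lemma eta_eq : eta = !![1, 0, 0, 0; 0, -1, 0, 0; 0, 0, -1, 0; 0, 0, 0, -1] := by
  ext i j
  fin_cases i <;> fin_cases j <;> rfl

lemma eta_mul_eta : eta * eta = 1 := by
  rw [eta, diagonal_mul_diagonal, ← diagonal_one]
  congr 1
  ext i
  fin_cases i <;> norm_num

namespace IsLorentz

lemma mul {A B : Matrix (Fin 4) (Fin 4) ℝ} (hA : IsLorentz A) (hB : IsLorentz B) :
    IsLorentz (A * B) := by
  unfold IsLorentz at *
  rw [transpose_mul, show Bᵀ * Aᵀ * eta * (A * B) = Bᵀ * (Aᵀ * eta * A) * B by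
    simp only [Matrix.mul_assoc], hA, hB]

lemma transpose {Λ : Matrix (Fin 4) (Fin 4) ℝ} (h : IsLorentz Λ) : IsLorentz Λᵀ := by
  have hinv : Λ * (eta * Λᵀ * eta) = 1 := mul_eq_one_comm.mp <| by
    rw [show eta * Λᵀ * eta * Λ = eta * (Λᵀ * eta * Λ) by simp only [Matrix.mul_assoc], h,
      eta_mul_eta]
  unfold IsLorentz
  calc Λᵀᵀ * eta * Λᵀ = Λ * (eta * Λᵀ * eta) * eta := by
        simp only [transpose_transpose, Matrix.mul_assoc, eta_mul_eta, Matrix.mul_one]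
    _ = eta := by rw [hinv, Matrix.one_mul]

end IsLorentz

lemma isLorentz_of_transpose_mul_self_of_commute {B : Matrix (Fin 4) (Fin 4) ℝ}
    (hB : Bᵀ * B = 1) (hη : B * eta = eta * B) : IsLorentz B := by
  rw [IsLorentz, Matrix.mul_assoc, ← hη, ← Matrix.mul_assoc, hB, Matrix.one_mul]

lemma mul_transpose_conj_conj {n R : Type*} [Fintype n] [DecidableEq n] [CommRing R]
    {A P X : Matrix n n R} (hP : Pᵀ * P = 1) :
    A * Pᵀ * (P * X * Pᵀ) * (A * Pᵀ)ᵀ = A * X * Aᵀ := by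
  simp only [transpose_mul, transpose_transpose, Matrix.mul_assoc]
  rw [← Matrix.mul_assoc Pᵀ P, hP, Matrix.one_mul, ← Matrix.mul_assoc Pᵀ P, hP, Matrix.one_mul]

def frameRotation (u v : Fin 3 → ℝ) : Matrix (Fin 4) (Fin 4) ℝ :=
  !![1, 0, 0, 0;
     0, u 0, v 0, u 1 * v 2 - u 2 * v 1;
     0, u 1, v 1, u 2 * v 0 - u 0 * v 2;
     0, u 2, v 2, u 0 * v 1 - u 1 * v 0]

section FrameRotation

variable {u v : Fin 3 → ℝ}

lemma frameRotation_transpose_mul_self (hu : u ⬝ᵥ u = 1) (hv : v ⬝ᵥ v = 1)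
    (huv : u ⬝ᵥ v = 0) : (frameRotation u v)ᵀ * frameRotation u v = 1 := by
  simp only [dotProduct, Fin.sum_univ_three] at hu hv huv
  ext i j
  fin_cases i <;> fin_cases j <;>
    simp [frameRotation, Matrix.mul_apply, Fin.sum_univ_four] <;> grind

lemma frameRotation_mul_eta (u v : Fin 3 → ℝ) :
    frameRotation u v * eta = eta * frameRotation u v := by
  rw [eta_eq]
  ext i j
  fin_cases i <;> fin_cases j <;> simp [frameRotation, Matrix.mul_apply, Fin.sum_univ_four]

lemma isLorentz_frameRotation (hu : u ⬝ᵥ u = 1) (hv : v ⬝ᵥ v = 1) (huv : u ⬝ᵥ v = 0) :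
    IsLorentz (frameRotation u v) :=
  isLorentz_of_transpose_mul_self_of_commute (frameRotation_transpose_mul_self hu hv huv)
    (frameRotation_mul_eta u v)

lemma det_frameRotation (hu : u ⬝ᵥ u = 1) (hv : v ⬝ᵥ v = 1) (huv : u ⬝ᵥ v = 0) :
    (frameRotation u v).det = 1 := by
  simp only [dotProduct, Fin.sum_univ_three] at hu hv huv
  simp [frameRotation, Matrix.det_succ_row_zero, Fin.sum_univ_succ]
  grind

lemma frameRotation_mul_mul_transpose_apply_zero_zero (u v u' v' : Fin 3 → ℝ)
    (A : Matrix (Fin 4) (Fin 4) ℝ) :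
    (frameRotation u v * A * (frameRotation u' v')ᵀ) 0 0 = A 0 0 := by
  simp [frameRotation, Matrix.mul_apply, vecMul, dotProduct, Fin.sum_univ_four]

lemma frameRotation_conj (hu : u ⬝ᵥ u = 1) (huv : u ⬝ᵥ v = 0) :
    frameRotation u v * skewOfEM ![1, 0, 0] ![0, 1, 0] * (frameRotation u v)ᵀ =
      skewOfEM u v := by
  simp only [dotProduct, Fin.sum_univ_three] at hu huv
  ext i j
  fin_cases i <;> fin_cases j <;>
    simp [frameRotation, skewOfEM, Matrix.mul_apply, Fin.sum_univ_four] <;> grind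

end FrameRotation

open Real in
def boostZ (φ : ℝ) : Matrix (Fin 4) (Fin 4) ℝ :=
  !![cosh φ, 0, 0, sinh φ;
     0, 1, 0, 0;
     0, 0, 1, 0;
     sinh φ, 0, 0, cosh φ]

section Boost

variable (φ : ℝ)

lemma boostZ_transpose : (boostZ φ)ᵀ = boostZ φ := by
  ext i j
  fin_cases i <;> fin_cases j <;> simp [boostZ]

lemma isLorentz_boostZ : IsLorentz (boostZ φ) := by
  have key := Real.cosh_sq φ
  unfold IsLorentz
  rw [boostZ_transpose, eta_eq]
  ext i j
  fin_cases i <;> fin_cases j <;>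
    simp [boostZ, Matrix.mul_apply, Fin.sum_univ_four] <;> grind

lemma det_boostZ : (boostZ φ).det = 1 := by
  have key := Real.cosh_sq φ
  simp [boostZ, det_succ_row_zero, Fin.sum_univ_succ, Fin.succAbove]
  grind

lemma boostZ_conj :
    boostZ φ * skewOfEM ![1, 0, 0] ![0, 1, 0] * boostZ φ =
      Real.exp φ • skewOfEM ![1, 0, 0] ![0, 1, 0] := by
  ext i j
  fin_cases i <;> fin_cases j <;>
    simp [boostZ, skewOfEM, Matrix.mul_apply, Fin.sum_univ_four, ← Real.cosh_add_sinh]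
  ring

end Boost

/-- For every pair of points of Σ₀ there is a proper orthochronous Lorentz
transformation (det Λ = 1, Λ⁰₀ ≥ 1) carrying one to the other. -/
theorem stmt3 (σ₀ σ : Matrix (Fin 4) (Fin 4) ℝ)
    (h₀ : InSigma0 σ₀) (h : InSigma0 σ) :
    ∃ Λ : Matrix (Fin 4) (Fin 4) ℝ, IsLorentz Λ ∧ Λ.det = 1 ∧ 1 ≤ Λ 0 0 ∧
      Λ * σ₀ * Λᵀ = σ := by
  obtain ⟨r₀, hr₀, u₀, v₀, hu₀, hv₀, huv₀, rfl⟩ := h₀.exists_eq_smul_skewOfEM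
  obtain ⟨r, hr, u, v, hu, hv, huv, rfl⟩ := h.exists_eq_smul_skewOfEM
  set φ := Real.log (r / r₀)
  set B := frameRotation u v
  set B₀ := frameRotation u₀ v₀
  refine ⟨B * boostZ φ * B₀ᵀ, ?_, ?_, ?_, ?_⟩
  · exact ((isLorentz_frameRotation hu hv huv).mul (isLorentz_boostZ φ)).mul
      (isLorentz_frameRotation hu₀ hv₀ huv₀).transpose
  · rw [det_mul, det_mul, det_transpose, det_frameRotation hu hv huv,
      det_frameRotation hu₀ hv₀ huv₀, det_boostZ, one_mul, one_mul]
  · rw [frameRotation_mul_mul_transpose_apply_zero_zero]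
    exact Real.one_le_cosh φ
  · have hexp : Real.exp φ = r / r₀ := Real.exp_log (div_pos hr hr₀)
    have hB₀ : B₀ᵀ * B₀ = 1 := frameRotation_transpose_mul_self hu₀ hv₀ huv₀
    set C := skewOfEM ![1, 0, 0] ![0, 1, 0]
    calc B * boostZ φ * B₀ᵀ * (r₀ • skewOfEM u₀ v₀) * (B * boostZ φ * B₀ᵀ)ᵀ
        = r₀ • (B * boostZ φ * B₀ᵀ * (B₀ * C * B₀ᵀ) * (B * boostZ φ * B₀ᵀ)ᵀ) := by
          rw [frameRotation_conj hu₀ huv₀, Matrix.mul_smul, Matrix.smul_mul]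
      _ = r₀ • (B * (boostZ φ * C * boostZ φ) * Bᵀ) := by
          rw [mul_transpose_conj_conj hB₀, transpose_mul, boostZ_transpose]
          simp only [Matrix.mul_assoc]
      _ = r • skewOfEM u v := by
          rw [boostZ_conj, hexp, Matrix.mul_smul, Matrix.smul_mul, smul_smul,
            mul_div_cancel₀ r hr₀.ne', frameRotation_conj hu huv]
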